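/- Let n ≥ 1, let B ⊆ Fin n, let a : Fin n → Fin n → ℝ be a measurement matrix, and let g : Fin n → ℝ be nonzero with g_i = 0 for all i ∉ B and ∑_i g_i = 0. Then: (1) there exists u* with ∑_i g_i·u*_i = 1 minimizing I over M_g := { u : ∑_i g_i·u_i = 1 }; (2) there exists a Neumann dual feasible pair (b*, λ*) with I(u*) = λ*; and (3) for every u ∈ M_g and every Neumann dual feasible pair (b, λ), one has λ ≤ I(u). (Strong duality with attainment for the Neumann least gradient problem.) -/

import Mathlib

noncomputable def lgEnergy {n : ℕ} (a : Fin n → Fin n → ℝ) (u : Fin n → ℝ) : ℝ :=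
  (1 / 2) * ∑ i, ∑ j, a i j * |u i - u j|

noncomputable def dvg {n : ℕ} (b : Fin n → Fin n → ℝ) (i : Fin n) : ℝ :=
  ∑ j, (b j i - b i j)

/-!
The energy is the support function of the polytope `D = div(box)`, where the box is
`|b i j| ≤ a i j / 2`: the pairing `⟨div b, u⟩` is at most `I(u)` on the box, with equality for
`b i j = ± a i j / 2` according to the sign of `u j - u i`. This is weak duality, and it shows
that `I` is a seminorm. A continuous seminorm on a finite-dimensional space attains its infimum
`m` on an affine hyperplane, since off its kernel it is coercive. Finally `m • g ∈ D`: otherwise a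
functional separating `m • g` from the compact convex set `D`, rescaled to meet the constraint,
would be a competitor of energy `< m`.
-/

open Finset Matrix

namespace Seminorm

variable {E : Type*}

section Module

variable [AddCommGroup E] [Module ℝ E] (p : Seminorm ℝ E)

def ker : Submodule ℝ E where
  carrier := {x | p x = 0}
  add_mem' {x y} hx hy :=
    le_antisymm ((map_add_le_add p x y).trans_eq (by rw [hx.out, hy.out, add_zero]))
      (apply_nonneg p _)
  zero_mem' := map_zero p
  smul_mem' c x hx := by
    change p (c • x) = 0
    rw [map_smul_eq_mul, hx.out, mul_zero]

theorem apply_add_of_mem_ker {x : E} (hx : x ∈ p.ker) (y : E) : p (x + y) = p y := by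
  refine le_antisymm ((map_add_le_add p x y).trans_eq (by rw [hx.out, zero_add])) ?_
  calc p y = p (-x + (x + y)) := by rw [neg_add_cancel_left]
    _ ≤ p (-x) + p (x + y) := map_add_le_add p _ _
    _ = p (x + y) := by rw [map_neg_eq_map, hx.out, zero_add]

end Module

variable [NormedAddCommGroup E] [NormedSpace ℝ E] [FiniteDimensional ℝ E]
  (p : Seminorm ℝ E)

theorem exists_pos_mul_norm_le (hp : Continuous p) {W : Submodule ℝ E}
    (hW : Disjoint p.ker W) : ∃ m > 0, ∀ w ∈ W, m * ‖w‖ ≤ p w := by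
  set S := (W : Set E) ∩ Metric.sphere 0 1
  have hnormalize : ∀ w ∈ W, w ≠ 0 → ‖w‖⁻¹ • w ∈ S := fun w hw hw0 =>
    ⟨W.smul_mem _ hw, by simp [norm_smul, hw0]⟩
  have hbound : ∀ m : ℝ, (∀ w ∈ S, m ≤ p w) → ∀ w ∈ W, m * ‖w‖ ≤ p w := by
    intro m hm w hw
    rcases eq_or_ne w 0 with rfl | hw0
    · simp
    have h := hm _ (hnormalize w hw hw0)
    rwa [map_smul_eq_mul, norm_inv, norm_norm, ← div_eq_inv_mul,
      le_div_iff₀ (norm_pos_iff.2 hw0)] at h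
  rcases S.eq_empty_or_nonempty with hS | hS
  · exact ⟨1, one_pos, hbound 1 (by simp [hS])⟩
  have hScpt : IsCompact S :=
    (isCompact_sphere 0 1).inter_left W.closed_of_finiteDimensional
  obtain ⟨w₁, ⟨hw₁W, hw₁⟩, hmin⟩ := hScpt.exists_isMinOn hS hp.continuousOn
  refine ⟨p w₁, (apply_nonneg p w₁).lt_of_ne fun h => ?_, hbound _ fun w hw => hmin hw⟩
  have : w₁ = 0 := Submodule.disjoint_def.1 hW w₁ h.symm hw₁W
  simp [this] at hw₁

theorem exists_forall_le_of_ker_le (hp : Continuous p) (φ : E →ₗ[ℝ] ℝ)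
    (hker : p.ker ≤ LinearMap.ker φ) {u₀ : E} (hu₀ : φ u₀ = 1) :
    ∃ u, φ u = 1 ∧ ∀ v, φ v = 1 → p u ≤ p v := by
  obtain ⟨W, hW⟩ := p.ker.exists_isCompl
  obtain ⟨m, hm, hcoer⟩ := p.exists_pos_mul_norm_le hp hW.disjoint
  have hrep : ∀ u, ∃ w ∈ W, p w = p u ∧ φ w = φ u := by
    intro u
    obtain ⟨x, w, hx, hw, rfl⟩ := Submodule.codisjoint_iff_exists_add_eq.1 hW.codisjoint u
    refine ⟨w, hw, (p.apply_add_of_mem_ker hx w).symm, ?_⟩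
    rw [map_add, LinearMap.mem_ker.1 (hker hx), zero_add]
  obtain ⟨w₀, hw₀, hpw₀, hφw₀⟩ := hrep u₀
  set K := ((W : Set E) ∩ {w | φ w = 1}) ∩ Metric.closedBall 0 (p w₀ / m)
  have hK : IsCompact K := (isCompact_closedBall _ _).inter_left <|
    W.closed_of_finiteDimensional.inter
      (isClosed_eq φ.continuous_of_finiteDimensional continuous_const)
  have hmemK : ∀ w ∈ W, φ w = 1 → p w ≤ p w₀ → w ∈ K := fun w hw hφw hpw =>
    ⟨⟨hw, hφw⟩, by
      rw [mem_closedBall_zero_iff, le_div_iff₀ hm, mul_comm]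
      exact (hcoer w hw).trans hpw⟩
  obtain ⟨u, huK, hmin⟩ :=
    hK.exists_isMinOn ⟨w₀, hmemK w₀ hw₀ (hφw₀.trans hu₀) le_rfl⟩ hp.continuousOn
  refine ⟨u, huK.1.2, fun v hv => ?_⟩
  obtain ⟨w, hw, hpw, hφw⟩ := hrep v
  rw [← hpw]
  rcases le_or_gt (p w) (p w₀) with h | h
  · exact hmin (hmemK w hw (hφw.trans hv) h)
  · exact (hmin (hmemK w₀ hw₀ (hφw₀.trans hu₀) le_rfl)).trans h.le

theorem exists_forall_le_of_map_eq_one (hp : Continuous p) (φ : E →ₗ[ℝ] ℝ) {u₀ : E}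
    (hu₀ : φ u₀ = 1) : ∃ u, φ u = 1 ∧ ∀ v, φ v = 1 → p u ≤ p v := by
  by_cases hker : p.ker ≤ LinearMap.ker φ
  · exact p.exists_forall_le_of_ker_le hp φ hker hu₀
  obtain ⟨v, hv, hφv⟩ := SetLike.not_le_iff_exists.1 hker
  refine ⟨(φ v)⁻¹ • v, by rw [map_smul, smul_eq_mul, inv_mul_cancel₀ hφv], fun w _ => ?_⟩
  rw [map_smul_eq_mul, hv.out, mul_zero]
  exact apply_nonneg p w

end Seminorm

section NeumannDuality

variable {n : ℕ}

theorem lgEnergy_eq_sum (a : Fin n → Fin n → ℝ) (u : Fin n → ℝ) :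
    lgEnergy a u = ∑ i, ∑ j, a i j / 2 * |u j - u i| := by
  rw [lgEnergy, mul_sum]
  refine sum_congr rfl fun i _ => ?_
  rw [mul_sum]
  exact sum_congr rfl fun j _ => by rw [abs_sub_comm]; ring

theorem dvg_dotProduct (b : Fin n → Fin n → ℝ) (u : Fin n → ℝ) :
    dvg b ⬝ᵥ u = ∑ i, ∑ j, b i j * (u j - u i) := by
  simp only [dotProduct, dvg, sum_mul, sub_mul, mul_sub, sum_sub_distrib]
  rw [sum_comm]

theorem dvg_dotProduct_le_lgEnergy {a b : Fin n → Fin n → ℝ}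
    (hb : ∀ i j, |b i j| ≤ a i j / 2) (u : Fin n → ℝ) : dvg b ⬝ᵥ u ≤ lgEnergy a u := by
  rw [dvg_dotProduct, lgEnergy_eq_sum]
  refine sum_le_sum fun i _ => sum_le_sum fun j _ => ?_
  calc b i j * (u j - u i) ≤ |b i j| * |u j - u i| := by rw [← abs_mul]; exact le_abs_self _
    _ ≤ a i j / 2 * |u j - u i| := by gcongr; exact hb i j

theorem exists_dvg_dotProduct_eq_lgEnergy {a : Fin n → Fin n → ℝ} (ha : ∀ i j, 0 ≤ a i j)
    (u : Fin n → ℝ) :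
    ∃ b : Fin n → Fin n → ℝ, (∀ i j, |b i j| ≤ a i j / 2) ∧ dvg b ⬝ᵥ u = lgEnergy a u := by
  refine ⟨fun i j => if 0 ≤ u j - u i then a i j / 2 else -(a i j / 2), fun i j => ?_, ?_⟩
  · have h : |a i j / 2| = a i j / 2 := abs_of_nonneg (by linarith [ha i j])
    dsimp only
    split_ifs <;> simp only [abs_neg, h, le_refl]
  · rw [dvg_dotProduct, lgEnergy_eq_sum]
    refine sum_congr rfl fun i _ => sum_congr rfl fun j _ => ?_
    split_ifs with h
    · rw [abs_of_nonneg h]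
    · rw [abs_of_neg (not_le.1 h)]; ring

theorem lgEnergy_smul (a : Fin n → Fin n → ℝ) (c : ℝ) (u : Fin n → ℝ) :
    lgEnergy a (c • u) = |c| * lgEnergy a u := by
  simp only [lgEnergy, Pi.smul_apply, smul_eq_mul, ← mul_sub, abs_mul, mul_sum]
  exact sum_congr rfl fun i _ => sum_congr rfl fun j _ => by ring

theorem lgEnergy_add_le {a : Fin n → Fin n → ℝ} (ha : ∀ i j, 0 ≤ a i j) (u v : Fin n → ℝ) :
    lgEnergy a (u + v) ≤ lgEnergy a u + lgEnergy a v := by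
  obtain ⟨b, hb, hbuv⟩ := exists_dvg_dotProduct_eq_lgEnergy ha (u + v)
  rw [← hbuv, dotProduct_add]
  exact add_le_add (dvg_dotProduct_le_lgEnergy hb u) (dvg_dotProduct_le_lgEnergy hb v)

noncomputable def lgSeminorm (a : Fin n → Fin n → ℝ) (ha : ∀ i j, 0 ≤ a i j) :
    Seminorm ℝ (Fin n → ℝ) :=
  Seminorm.of (lgEnergy a) (lgEnergy_add_le ha) (lgEnergy_smul a)

theorem continuous_lgEnergy (a : Fin n → Fin n → ℝ) : Continuous (lgEnergy a) := by
  unfold lgEnergy; fun_prop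

theorem continuous_dvg : Continuous (dvg : (Fin n → Fin n → ℝ) → Fin n → ℝ) := by
  unfold dvg; fun_prop

theorem isLinearMap_dvg : IsLinearMap ℝ (dvg : (Fin n → Fin n → ℝ) → Fin n → ℝ) where
  map_add b c := by
    ext i
    simp only [dvg, Pi.add_apply, ← sum_add_distrib]
    exact sum_congr rfl fun j _ => by ring
  map_smul r b := by ext i; simp only [dvg, Pi.smul_apply, smul_eq_mul, mul_sum, mul_sub]

def dualBox (a : Fin n → Fin n → ℝ) : Set (Fin n → Fin n → ℝ) :=
  {b | ∀ i j, |b i j| ≤ a i j / 2}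

theorem dualBox_eq_pi (a : Fin n → Fin n → ℝ) :
    dualBox a =
      Set.univ.pi fun i => Set.univ.pi fun j => Set.Icc (-(a i j / 2)) (a i j / 2) := by
  ext b
  simp only [dualBox, Set.mem_ofPred_eq, Set.mem_pi, Set.mem_univ, true_implies, Set.mem_Icc,
    abs_le]

theorem isCompact_dvg_image_dualBox (a : Fin n → Fin n → ℝ) : IsCompact (dvg '' dualBox a) := by
  rw [dualBox_eq_pi]
  exact (isCompact_univ_pi fun i => isCompact_univ_pi fun j => isCompact_Icc).image continuous_dvg

theorem convex_dvg_image_dualBox (a : Fin n → Fin n → ℝ) : Convex ℝ (dvg '' dualBox a) := by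
  rw [dualBox_eq_pi]
  exact (convex_pi fun i _ => convex_pi fun j _ => convex_Icc _ _).is_linear_image isLinearMap_dvg

theorem le_lgEnergy_of_dvg_eq_smul {a b : Fin n → Fin n → ℝ} {g u : Fin n → ℝ} {lam : ℝ}
    (hb : ∀ i j, |b i j| ≤ a i j / 2) (hdvg : ∀ i, dvg b i = lam * g i) (hu : g ⬝ᵥ u = 1) :
    lam ≤ lgEnergy a u :=
  calc lam = dvg b ⬝ᵥ u := by
        rw [show dvg b = lam • g from funext hdvg, smul_dotProduct, hu, smul_eq_mul, mul_one]
    _ ≤ lgEnergy a u := dvg_dotProduct_le_lgEnergy hb u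

theorem exists_dvg_eq_smul_of_le_lgEnergy {a : Fin n → Fin n → ℝ} (ha : ∀ i j, 0 ≤ a i j)
    {g : Fin n → ℝ} {m : ℝ} (hm : 0 ≤ m) (hle : ∀ v, g ⬝ᵥ v = 1 → m ≤ lgEnergy a v) :
    ∃ b ∈ dualBox a, dvg b = m • g := by
  by_contra hnot
  obtain ⟨f, s, hfD, hsf⟩ := geometric_hahn_banach_closed_point (convex_dvg_image_dualBox a)
    (isCompact_dvg_image_dualBox a).isClosed fun ⟨b, hb, hbg⟩ => hnot ⟨b, hb, hbg⟩
  set e := (dotProductEquiv ℝ (Fin n)).symm f.toLinearMap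
  have hf : ∀ x, f x = e ⬝ᵥ x := fun x => by
    rw [← dotProductEquiv_apply_apply, LinearEquiv.apply_symm_apply]; rfl
  have hs : 0 < s := by
    have h0 := hfD (dvg 0) ⟨0, fun i j => by simpa using div_nonneg (ha i j) zero_le_two, rfl⟩
    rwa [isLinearMap_dvg.map_zero, map_zero] at h0
  rw [map_smul, smul_eq_mul] at hsf
  have hfg : 0 < f g := pos_of_mul_pos_right (hs.trans hsf) hm
  set v := (f g)⁻¹ • e
  have hv : g ⬝ᵥ v = 1 := by
    rw [dotProduct_smul, dotProduct_comm, ← hf, smul_eq_mul, inv_mul_cancel₀ hfg.ne']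
  obtain ⟨b, hb, hbv⟩ := exists_dvg_dotProduct_eq_lgEnergy ha v
  have hlt : lgEnergy a v < m :=
    calc lgEnergy a v = (f g)⁻¹ * f (dvg b) := by
          rw [← hbv, dotProduct_smul, dotProduct_comm, ← hf, smul_eq_mul]
      _ < (f g)⁻¹ * (m * f g) := by
          gcongr; exact (hfD _ ⟨b, hb, rfl⟩).trans hsf
      _ = m := by field_simp
  exact (hle v hv).not_gt hlt

end NeumannDuality

theorem neumann_strong_duality_general
    (n : ℕ)
    (a : Fin n → Fin n → ℝ)
    (hanonneg : ∀ i j, 0 ≤ a i j)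
    (g : Fin n → ℝ) (hgne : g ≠ 0) :
    ∃ ustar : Fin n → ℝ,
      (∑ i, g i * ustar i = 1) ∧
      (∀ u : Fin n → ℝ, ∑ i, g i * u i = 1 → lgEnergy a ustar ≤ lgEnergy a u) ∧
      (∃ bstar : Fin n → Fin n → ℝ, ∃ lamstar : ℝ,
        (∀ i j, |bstar i j| ≤ a i j / 2) ∧
        (∀ i, dvg bstar i = lamstar * g i) ∧
        lgEnergy a ustar = lamstar) ∧
      (∀ u : Fin n → ℝ, ∑ i, g i * u i = 1 →
        ∀ (b : Fin n → Fin n → ℝ) (lam : ℝ),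
          (∀ i j, |b i j| ≤ a i j / 2) → (∀ i, dvg b i = lam * g i) →
          lam ≤ lgEnergy a u) := by
  obtain ⟨i₀, hi₀⟩ := Function.ne_iff.1 hgne
  obtain ⟨ustar, hfeas, hmin⟩ := (lgSeminorm a hanonneg).exists_forall_le_of_map_eq_one
    (continuous_lgEnergy a) (dotProductEquiv ℝ (Fin n) g) (u₀ := Pi.single i₀ (g i₀)⁻¹)
    (by simpa using mul_inv_cancel₀ hi₀)
  obtain ⟨bstar, hbstar, hdvg⟩ := exists_dvg_eq_smul_of_le_lgEnergy hanonneg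
    (apply_nonneg (lgSeminorm a hanonneg) ustar) hmin
  exact ⟨ustar, hfeas, hmin, ⟨bstar, _, hbstar, fun i => congrFun hdvg i, rfl⟩,
    fun u hu b lam hb hdvg => le_lgEnergy_of_dvg_eq_smul hb hdvg hu⟩

/-- Strong duality with attainment for the Neumann least gradient problem. -/
theorem neumann_strong_duality
    (n : ℕ) (hn : 1 ≤ n) (B : Finset (Fin n))
    (a : Fin n → Fin n → ℝ)
    (hasymm : ∀ i j, a i j = a j i) (hanonneg : ∀ i j, 0 ≤ a i j)
    (hadiag : ∀ i, a i i = 0)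
    (g : Fin n → ℝ) (hgne : g ≠ 0) (hgB : ∀ i, i ∉ B → g i = 0)
    (hgsum : ∑ i, g i = 0) :
    ∃ ustar : Fin n → ℝ,
      (∑ i, g i * ustar i = 1) ∧
      (∀ u : Fin n → ℝ, ∑ i, g i * u i = 1 → lgEnergy a ustar ≤ lgEnergy a u) ∧
      (∃ bstar : Fin n → Fin n → ℝ, ∃ lamstar : ℝ,
        (∀ i j, |bstar i j| ≤ a i j / 2) ∧
        (∀ i, dvg bstar i = lamstar * g i) ∧
        lgEnergy a ustar = lamstar) ∧
      (∀ u : Fin n → ℝ, ∑ i, g i * u i = 1 →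
        ∀ (b : Fin n → Fin n → ℝ) (lam : ℝ),
          (∀ i j, |b i j| ≤ a i j / 2) → (∀ i, dvg b i = lam * g i) →
          lam ≤ lgEnergy a u) :=
  neumann_strong_duality_general n a hanonneg g hgne
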